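/- Let $G$ be a finite group, $Q \le P$ subgroups, and suppose $N_G(Q) = (N_G(Q) \cap N_G(P)) \cdot C_G(Q)$. Set $R = N_P(Q)$ and $L = R \cdot C_G(Q)$ (which is a subgroup since elements of $R$ normalize $Q$ and hence normalize $C_G(Q)$). Then $L$ is a normal subgroup of $N_G(Q)$ and $N_G(Q) = (N_G(R) \cap N_G(Q)) \cdot L$. -/

import Mathlib

open scoped Pointwise

section Aux

variable {G : Type*} [Group G] {Q : Subgroup G}

/-- Elements of the normalizer of `Q` normalize the centralizer of `Q`. -/
lemma conj_mem_centralizer {r c : G} (hr : r ∈ (Subgroup.normalizer (Q : Set G)))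
    (hc : c ∈ Subgroup.centralizer (Q : Set G)) :
    r * c * r⁻¹ ∈ Subgroup.centralizer (Q : Set G) := by
  rw [Subgroup.mem_centralizer_iff] at hc ⊢
  intro q hq
  have hq' : r⁻¹ * q * r ∈ Q := (Subgroup.mem_normalizer_iff''.1 hr q).1 hq
  calc q * (r * c * r⁻¹) = r * ((r⁻¹ * q * r) * c) * r⁻¹ := by group
    _ = r * (c * (r⁻¹ * q * r)) * r⁻¹ := by rw [hc _ hq']
    _ = r * c * r⁻¹ * q := by group

/-- The centralizer of `Q` is contained in the normalizer of `Q`. -/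
lemma centralizer_le_normalizer' :
    Subgroup.centralizer (Q : Set G) ≤ (Subgroup.normalizer (Q : Set G)) := by
  intro c hc
  rw [Subgroup.mem_centralizer_iff] at hc
  rw [Subgroup.mem_normalizer_iff]
  intro q
  constructor
  · intro hq
    have h2 : q * c = c * q := hc q hq
    have : c * q * c⁻¹ = q := by rw [← h2]; group
    rwa [this]
  · intro hq
    have h2 := hc _ hq
    have e : q = c⁻¹ * (c * q * c⁻¹) * c := by group
    rw [e]
    have : c⁻¹ * (c * q * c⁻¹) * c = c * q * c⁻¹ := by
      calc c⁻¹ * (c * q * c⁻¹) * c = c⁻¹ * ((c * q * c⁻¹) * c) := by group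
        _ = c⁻¹ * (c * (c * q * c⁻¹)) := by rw [h2]
        _ = c * q * c⁻¹ := by group
    rw [this]; exact hq

end Aux

/-- If `Q ≤ P ≤ G` and `N_G(Q) = (N_G(Q) ∩ N_G(P)) C_G(Q)`, then setting
`R = N_P(Q)`, the product `L = R C_G(Q)` is a subgroup which is normal in
`N_G(Q)`, and `N_G(Q) = (N_G(R) ∩ N_G(Q)) L`. -/
theorem RCGQ_normal_in_normalizer (G : Type*) [Group G] [Finite G]
    (P Q : Subgroup G) (hQP : Q ≤ P)
    (hfus : ((Subgroup.normalizer (Q : Set G) : Subgroup G) : Set G) =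
      ((Subgroup.normalizer (Q : Set G) ⊓ Subgroup.normalizer (P : Set G) : Subgroup G) : Set G) *
        (Subgroup.centralizer (Q : Set G) : Set G)) :
    ∃ L : Subgroup G,
      (L : Set G) = ((Subgroup.normalizer (Q : Set G) ⊓ P : Subgroup G) : Set G) *
          (Subgroup.centralizer (Q : Set G) : Set G) ∧
      (∀ n ∈ (Subgroup.normalizer (Q : Set G)), ∀ x ∈ L, n * x * n⁻¹ ∈ L) ∧
      ((Subgroup.normalizer (Q : Set G) : Subgroup G) : Set G) =
        ((Subgroup.normalizer ((Subgroup.normalizer (Q : Set G) ⊓ P : Subgroup G) : Set G) ⊓ Subgroup.normalizer (Q : Set G) : Subgroup G) : Set G) *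
          (L : Set G) := by
  classical
  set R : Subgroup G := (Subgroup.normalizer (Q : Set G)) ⊓ P with hR
  set C : Subgroup G := Subgroup.centralizer (Q : Set G) with hC
  have hRnorm : ∀ r ∈ R, r ∈ (Subgroup.normalizer (Q : Set G)) := fun r hr => hr.1
  -- the set R * C is a subgroup
  have hmulmem : ∀ x y : G, x ∈ (R : Set G) * (C : Set G) →
      y ∈ (R : Set G) * (C : Set G) → x * y ∈ (R : Set G) * (C : Set G) := by
    rintro _ _ ⟨r₁, hr₁, c₁, hc₁, rfl⟩ ⟨r₂, hr₂, c₂, hc₂, rfl⟩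
    have h1 : r₂⁻¹ * c₁ * r₂ ∈ C := by
      simpa using conj_mem_centralizer (inv_mem (hRnorm _ hr₂)) hc₁
    exact ⟨r₁ * r₂, mul_mem hr₁ hr₂, (r₂⁻¹ * c₁ * r₂) * c₂, mul_mem h1 hc₂, by group⟩
  have hinvmem : ∀ x : G, x ∈ (R : Set G) * (C : Set G) →
      x⁻¹ ∈ (R : Set G) * (C : Set G) := by
    rintro _ ⟨r, hr, c, hc, rfl⟩
    refine ⟨r⁻¹, inv_mem hr, r * c⁻¹ * r⁻¹,
      conj_mem_centralizer (hRnorm _ hr) (inv_mem hc), by group⟩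
  let L : Subgroup G :=
    { carrier := (R : Set G) * (C : Set G)
      one_mem' := ⟨1, one_mem R, 1, one_mem C, by simp⟩
      mul_mem' := fun ha hb => hmulmem _ _ ha hb
      inv_mem' := fun ha => hinvmem _ ha }
  have hLset : (L : Set G) = (R : Set G) * (C : Set G) := rfl
  have hLmem : ∀ x : G, x ∈ L ↔ x ∈ (R : Set G) * (C : Set G) := fun _ => Iff.rfl
  -- conjugation by elements of N_G(Q) ∩ N_G(P) preserves L
  have hconjL : ∀ m, m ∈ (Subgroup.normalizer (Q : Set G)) ⊓ Subgroup.normalizer (P : Set G) → ∀ x ∈ L, m * x * m⁻¹ ∈ L := by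
    rintro m ⟨hmQ, hmP⟩ x hx
    obtain ⟨r, hr, c, hc, rfl⟩ := (hLmem x).1 hx
    have hmem : m * r * m⁻¹ ∈ R :=
      Subgroup.mem_inf.2 ⟨mul_mem (mul_mem hmQ (hRnorm _ hr)) (inv_mem hmQ),
        (Subgroup.mem_normalizer_iff.1 hmP r).1 hr.2⟩
    exact (hLmem _).2 ⟨m * r * m⁻¹, hmem, m * c * m⁻¹, conj_mem_centralizer hmQ hc, by group⟩
  refine ⟨L, hLset, ?_, ?_⟩
  · -- normality in N_G(Q)
    intro n hn x hx
    have hn' : n ∈ ((Subgroup.normalizer (Q : Set G) ⊓ Subgroup.normalizer (P : Set G) : Subgroup G) : Set G) * (C : Set G) := by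
      rw [← hfus]; exact hn
    obtain ⟨m, hm, c₀, hc₀, rfl⟩ := hn'
    obtain ⟨r, hr, c, hc, rfl⟩ := (hLmem x).1 hx
    -- c₀ * (r * c) * c₀⁻¹ ∈ L
    have step1 : c₀ * (r * c) * c₀⁻¹ ∈ L := by
      have h1 : r⁻¹ * c₀ * r ∈ C := by
        simpa using conj_mem_centralizer (inv_mem (hRnorm _ hr)) hc₀
      exact (hLmem _).2 ⟨r, hr, (r⁻¹ * c₀ * r) * c * c₀⁻¹,
        mul_mem (mul_mem h1 hc) (inv_mem hc₀), by group⟩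
    have : (m * c₀) * (r * c) * (m * c₀)⁻¹ = m * (c₀ * (r * c) * c₀⁻¹) * m⁻¹ := by group
    rw [this]
    exact hconjL m hm _ step1
  · -- the factorization N_G(Q) = (N_G(R) ∩ N_G(Q)) * L
    apply Set.Subset.antisymm
    · intro n hn
      have hn' : n ∈ ((Subgroup.normalizer (Q : Set G) ⊓ Subgroup.normalizer (P : Set G) : Subgroup G) : Set G) * (C : Set G) := by
        rw [← hfus]; exact hn
      obtain ⟨m, hm, c₀, hc₀, rfl⟩ := hn'
      have hm' : m ∈ (Subgroup.normalizer (Q : Set G)) ⊓ Subgroup.normalizer (P : Set G) := hm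
      have hmN : m ∈ (Subgroup.normalizer (R : Set G)) := by
        rw [Subgroup.mem_normalizer_iff]
        intro r
        constructor
        · intro hr
          exact Subgroup.mem_inf.2 ⟨mul_mem (mul_mem hm'.1 (hRnorm _ hr)) (inv_mem hm'.1),
            (Subgroup.mem_normalizer_iff.1 hm'.2 r).1 hr.2⟩
        · intro hr
          have e : r = m⁻¹ * (m * r * m⁻¹) * m := by group
          rw [e]
          refine Subgroup.mem_inf.2 ⟨mul_mem (mul_mem (inv_mem hm'.1) (hRnorm _ hr)) hm'.1, ?_⟩
          have := (Subgroup.mem_normalizer_iff.1 (inv_mem hm'.2) (m * r * m⁻¹)).1 hr.2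
          simpa [mul_assoc] using this
      have hmem : m ∈ ((Subgroup.normalizer (R : Set G) ⊓ Subgroup.normalizer (Q : Set G) : Subgroup G) : Set G) :=
        Subgroup.mem_inf.2 ⟨hmN, hm'.1⟩
      exact ⟨m, hmem, c₀, (hLmem c₀).2 ⟨1, one_mem R, c₀, hc₀, by simp⟩, rfl⟩
    · rintro _ ⟨m, hm, x, hx, rfl⟩
      have hxN : x ∈ (Subgroup.normalizer (Q : Set G)) := by
        obtain ⟨r, hr, c, hc, rfl⟩ := (hLmem x).1 hx
        exact mul_mem (hRnorm _ hr) (centralizer_le_normalizer' hc)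
      exact mul_mem hm.2 hxN
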